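/- Let g be a probability density on ℝ with finite total variation TV(g) and let ḡ(z) = Σ_{n∈ℤ} g(n+z) be the density of the fractional part. Then sup_{z∈[0,1]} |ḡ(z) − 1| ≤ TV(g)/2. -/

import Mathlib

open Set MeasureTheory
open scoped ENNReal

/-!
For `a ≤ b ≤ a + 1` the points `n + a ≤ n + b ≤ n + a + 1`, `n ∈ ℤ`, interleave, so
`2 ḡ(b)` and `ḡ(a) + ḡ(a + 1) = 2 ḡ(a)` differ by at most
`∑ₙ (|g(n+b) - g(n+a)| + |g(n+a+1) - g(n+b)|) ≤ TV(g)`. Hence `ḡ` oscillates by at most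
`TV(g)/2` on every window of length one, while its average over `[0, 1)` is `∫ g = 1`.
-/

section Variation

variable {E : Type*} [PseudoEMetricSpace E] (f : ℝ → E)

lemma edist_add_edist_le_eVariationOn_Icc {a b c : ℝ} (hab : a ≤ b) (hbc : b ≤ c) :
    edist (f a) (f b) + edist (f b) (f c) ≤ eVariationOn f (Icc a c) := by
  have hsplit := eVariationOn.Icc_add_Icc f hab hbc (mem_univ b)
  simp only [univ_inter] at hsplit
  rw [← hsplit]
  gcongr
  · exact eVariationOn.edist_le f (left_mem_Icc.2 hab) (right_mem_Icc.2 hab)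
  · exact eVariationOn.edist_le f (left_mem_Icc.2 hbc) (right_mem_Icc.2 hbc)

lemma tsum_eVariationOn_Icc_intCast_add_le (a : ℝ) :
    ∑' n : ℤ, eVariationOn f (Icc (n + a) (n + a + 1)) ≤ eVariationOn f univ := by
  refine ENNReal.summable.tsum_le_of_sum_le fun F => ?_
  set N := F.sup Int.natAbs
  have hF : F ⊆ (Finset.range (2 * N + 1)).image (fun i : ℕ => (i : ℤ) - N) := by
    intro n hn
    have := Finset.le_sup (f := Int.natAbs) hn
    exact Finset.mem_image.2 ⟨(n + N).toNat, Finset.mem_range.2 (by omega), by omega⟩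
  have hmono : Monotone fun i : ℕ => a - N + i := fun i j hij => by simpa using hij
  calc ∑ n ∈ F, eVariationOn f (Icc (n + a) (n + a + 1))
      ≤ ∑ n ∈ (Finset.range (2 * N + 1)).image (fun i : ℕ => (i : ℤ) - N),
          eVariationOn f (Icc (n + a) (n + a + 1)) := Finset.sum_le_sum_of_subset hF
    _ = ∑ i ∈ Finset.range (2 * N + 1),
          eVariationOn f (Icc (a - N + i) (a - N + (i + 1 : ℕ))) := by
        rw [Finset.sum_image fun i _ j _ hij => by omega]
        refine Finset.sum_congr rfl fun i _ => ?_
        push_cast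
        ring_nf
    _ = eVariationOn f (Icc (a - N + (0 : ℕ)) (a - N + (2 * N + 1 : ℕ))) :=
        eVariationOn.sum' f hmono
    _ ≤ eVariationOn f univ := eVariationOn.mono f (subset_univ _)

end Variation

lemma ENNReal.ofReal_le_ofReal_add_edist (x y : ℝ) :
    ENNReal.ofReal x ≤ ENNReal.ofReal y + edist x y := by
  rw [edist_dist, Real.dist_eq]
  refine (ENNReal.ofReal_le_ofReal ?_).trans ENNReal.ofReal_add_le
  linarith [le_abs_self (x - y)]

lemma ENNReal.le_add_div_two_of_add_self_le {x y c : ℝ≥0∞} (h : x + x ≤ y + y + c) :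
    x ≤ y + c / 2 := by
  by_contra! hlt
  have := ENNReal.add_lt_add hlt hlt
  rw [add_add_add_comm, ENNReal.add_halves] at this
  exact this.not_ge h

lemma ENNReal.abs_toReal_sub_toReal_le {x y c : ℝ≥0∞} (hy : y ≠ ⊤) (hc : c ≠ ⊤)
    (hxy : x ≤ y + c) (hyx : y ≤ x + c) : |x.toReal - y.toReal| ≤ c.toReal := by
  have hx : x ≠ ⊤ := ne_top_of_le_ne_top (ENNReal.add_ne_top.2 ⟨hy, hc⟩) hxy
  have h₁ := ENNReal.toReal_mono (ENNReal.add_ne_top.2 ⟨hy, hc⟩) hxy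
  have h₂ := ENNReal.toReal_mono (ENNReal.add_ne_top.2 ⟨hx, hc⟩) hyx
  rw [ENNReal.toReal_add hy hc] at h₁
  rw [ENNReal.toReal_add hx hc] at h₂
  exact abs_sub_le_iff.2 ⟨by linarith, by linarith⟩

lemma lintegral_Ico_tsum_intCast_add {f : ℝ → ℝ≥0∞} (hf : AEMeasurable f) :
    ∫⁻ x in Ico (0 : ℝ) 1, ∑' n : ℤ, f (n + x) = ∫⁻ x, f x := by
  have hshift (n : ℤ) :
      ∫⁻ x in Ico (0 : ℝ) 1, f (n + x) = ∫⁻ y in Ico (n : ℝ) (n + 1), f y := by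
    rw [(measurePreserving_add_left volume (n : ℝ)).setLIntegral_comp_emb
      (measurableEmbedding_addLeft _), image_const_add_Ico, add_zero]
  have hmeas (n : ℤ) : AEMeasurable (fun x => f (n + x)) (volume.restrict (Ico (0 : ℝ) 1)) :=
    (hf.comp_quasiMeasurePreserving
      (measurePreserving_add_left volume (n : ℝ)).quasiMeasurePreserving).restrict
  rw [lintegral_tsum hmeas, tsum_congr hshift, ← lintegral_iUnion (fun _ => measurableSet_Ico)
    (pairwise_disjoint_Ico_intCast ℝ), iUnion_Ico_intCast, Measure.restrict_univ]

/-- The stacked density `ḡ`, valued in `ℝ≥0∞` so that no summability is needed. -/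
noncomputable def stackedDensity (g : ℝ → ℝ) (x : ℝ) : ℝ≥0∞ :=
  ∑' n : ℤ, ENNReal.ofReal (g (n + x))

namespace stackedDensity

variable {g : ℝ → ℝ}

lemma toReal_eq (hg : ∀ y, 0 ≤ g y) (x : ℝ) :
    (stackedDensity g x).toReal = ∑' n : ℤ, g (n + x) := by
  rw [stackedDensity, ENNReal.tsum_toReal_eq fun _ => ENNReal.ofReal_ne_top]
  exact tsum_congr fun n => ENNReal.toReal_ofReal (hg _)

lemma add_one (x : ℝ) : stackedDensity g (x + 1) = stackedDensity g x := by
  calc stackedDensity g (x + 1) = ∑' n : ℤ, ENNReal.ofReal (g ((n + 1 : ℤ) + x)) := by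
        simp only [stackedDensity, Int.cast_add, Int.cast_one, add_assoc, add_comm 1 x]
    _ = stackedDensity g x := (Equiv.addRight 1).tsum_eq fun n : ℤ => ENNReal.ofReal (g (n + x))

lemma lintegral_Ico (hg : Integrable g) (hg_nonneg : 0 ≤ᵐ[volume] g) :
    ∫⁻ x in Ico (0 : ℝ) 1, stackedDensity g x = ENNReal.ofReal (∫ y, g y) := by
  rw [ofReal_integral_eq_lintegral_ofReal hg hg_nonneg]
  exact lintegral_Ico_tsum_intCast_add hg.aemeasurable.ennreal_ofReal

lemma add_self_le_and_add_self_le {a b : ℝ} (hab : a ≤ b) (hba : b ≤ a + 1) :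
    stackedDensity g b + stackedDensity g b ≤
        stackedDensity g a + stackedDensity g a + eVariationOn g univ ∧
      stackedDensity g a + stackedDensity g a ≤
        stackedDensity g b + stackedDensity g b + eVariationOn g univ := by
  set A : ℤ → ℝ≥0∞ := fun n => ENNReal.ofReal (g (n + a))
  set B : ℤ → ℝ≥0∞ := fun n => ENNReal.ofReal (g (n + b))
  set C : ℤ → ℝ≥0∞ := fun n => ENNReal.ofReal (g (n + (a + 1)))
  set D : ℤ → ℝ≥0∞ := fun n =>
    edist (g (n + a)) (g (n + b)) + edist (g (n + b)) (g (n + (a + 1)))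
  have hD : ∑' n, D n ≤ eVariationOn g univ := by
    refine (ENNReal.tsum_le_tsum fun n => ?_).trans (tsum_eVariationOn_Icc_intCast_add_le g a)
    simp only [D, ← add_assoc]
    exact edist_add_edist_le_eVariationOn_Icc g (by linarith) (by linarith)
  have hC : ∑' n, C n = stackedDensity g a := add_one a
  have hsum (u v : ℤ → ℝ≥0∞) :
      ∑' n, (u n + v n + D n) = ∑' n, u n + ∑' n, v n + ∑' n, D n := by
    rw [ENNReal.tsum_add, ENNReal.tsum_add]
  constructor
  · have hle (n : ℤ) : B n + B n ≤ A n + C n + D n := by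
      have h₁ := ENNReal.ofReal_le_ofReal_add_edist (g (n + b)) (g (n + a))
      have h₂ := ENNReal.ofReal_le_ofReal_add_edist (g (n + b)) (g (n + (a + 1)))
      rw [edist_comm] at h₁
      calc B n + B n ≤ (A n + _) + (C n + _) := add_le_add h₁ h₂
        _ = A n + C n + D n := by simp only [D]; ring
    calc stackedDensity g b + stackedDensity g b = ∑' n, (B n + B n) := ENNReal.tsum_add.symm
      _ ≤ ∑' n, (A n + C n + D n) := ENNReal.tsum_le_tsum hle
      _ ≤ _ := by rw [hsum, hC]; exact add_le_add_right hD _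
  · have hle (n : ℤ) : A n + C n ≤ B n + B n + D n := by
      have h₁ := ENNReal.ofReal_le_ofReal_add_edist (g (n + a)) (g (n + b))
      have h₂ := ENNReal.ofReal_le_ofReal_add_edist (g (n + (a + 1))) (g (n + b))
      rw [edist_comm] at h₂
      calc A n + C n ≤ (B n + _) + (B n + _) := add_le_add h₁ h₂
        _ = B n + B n + D n := by simp only [D]; ring
    calc stackedDensity g a + stackedDensity g a = ∑' n, A n + ∑' n, C n := by rw [hC]; rfl
      _ = ∑' n, (A n + C n) := ENNReal.tsum_add.symm
      _ ≤ ∑' n, (B n + B n + D n) := ENNReal.tsum_le_tsum hle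
      _ ≤ _ := by rw [hsum]; exact add_le_add_right hD _

lemma le_add_half_of_abs_sub_le_one {a b : ℝ} (hab : |a - b| ≤ 1) :
    stackedDensity g a ≤ stackedDensity g b + eVariationOn g univ / 2 := by
  obtain ⟨hab₁, hab₂⟩ := abs_le.1 hab
  rcases le_total a b with h | h
  · exact ENNReal.le_add_div_two_of_add_self_le (add_self_le_and_add_self_le h (by linarith)).2
  · exact ENNReal.le_add_div_two_of_add_self_le (add_self_le_and_add_self_le h (by linarith)).1

lemma le_one_add_and_one_le_add (hmass : ∫⁻ x in Ico (0 : ℝ) 1, stackedDensity g x = 1)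
    {z : ℝ} (hz : z ∈ Icc (0 : ℝ) 1) :
    stackedDensity g z ≤ 1 + eVariationOn g univ / 2 ∧
      1 ≤ stackedDensity g z + eVariationOn g univ / 2 := by
  have hclose (u : ℝ) (hu : u ∈ Ico (0 : ℝ) 1) : |z - u| ≤ 1 :=
    abs_le.2 ⟨by linarith [hz.1, hu.2], by linarith [hz.2, hu.1]⟩
  constructor
  · rw [← tsub_le_iff_right]
    calc stackedDensity g z - eVariationOn g univ / 2
        = ∫⁻ _ in Ico (0 : ℝ) 1, (stackedDensity g z - eVariationOn g univ / 2) := by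
          simp [Real.volume_Ico]
      _ ≤ ∫⁻ u in Ico (0 : ℝ) 1, stackedDensity g u :=
          setLIntegral_mono' measurableSet_Ico fun u hu =>
            tsub_le_iff_right.2 (le_add_half_of_abs_sub_le_one (hclose u hu))
      _ = 1 := hmass
  · calc 1 = ∫⁻ u in Ico (0 : ℝ) 1, stackedDensity g u := hmass.symm
      _ ≤ ∫⁻ _ in Ico (0 : ℝ) 1, (stackedDensity g z + eVariationOn g univ / 2) :=
          setLIntegral_mono' measurableSet_Ico fun u hu =>
            le_add_half_of_abs_sub_le_one ((abs_sub_comm u z).trans_le (hclose u hu))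
      _ = stackedDensity g z + eVariationOn g univ / 2 := by simp [Real.volume_Ico]

end stackedDensity

/-- Dümbgen–Leuenberger: the stacked density `ḡ` deviates from `1` by at most `TV(g)/2`. -/
theorem stacked_density_dist_one_le
    (g : ℝ → ℝ) (hg_nonneg : ∀ y, 0 ≤ g y)
    (hg_int : Integrable g)
    (hg_one : ∫ y, g y = 1)
    (hTV : eVariationOn g univ ≠ ⊤) :
    ∀ z ∈ Icc (0 : ℝ) 1,
      |(∑' n : ℤ, g (n + z)) - 1| ≤ (eVariationOn g univ).toReal / 2 := by
  intro z hz
  have hmass : ∫⁻ x in Ico (0 : ℝ) 1, stackedDensity g x = 1 := by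
    rw [stackedDensity.lintegral_Ico hg_int (ae_of_all _ hg_nonneg), hg_one, ENNReal.ofReal_one]
  obtain ⟨hle, hge⟩ := stackedDensity.le_one_add_and_one_le_add hmass hz
  have hbound := ENNReal.abs_toReal_sub_toReal_le ENNReal.one_ne_top
    (ENNReal.div_ne_top hTV two_ne_zero) hle hge
  rwa [stackedDensity.toReal_eq hg_nonneg, ENNReal.toReal_one, ENNReal.toReal_div,
    ENNReal.toReal_ofNat] at hbound
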